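/- Let M be a left A-module with a flat connection ∇ with respect to the universal differential calculus, and let m·a := a m − Σ m_A a m_M be the induced right action. Then ∇ is a bimodule connection: for all a ∈ A and m ∈ M, the following identity holds in A⊗M: ∇(m·a) = Σ m_A ⊗ (m_M·a) + σ̃(m,a), where σ̃(m,a) := 1⊗(a m) − a⊗m + Σ (m_A a)⊗m_M − Σ m_A⊗(a m_M) (this σ̃(m,a) is the value of the braiding map c_{M,Ω¹A} on m ⊗ da). -/

import Mathlib

open TensorProduct

variable (K A M : Type*) [Field K] [Ring A] [Algebra K A]
  [AddCommGroup M] [Module K M] [Module A M] [IsScalarTower K A M]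

/-- The action map `A ⊗ M → M`, `a ⊗ m ↦ a • m`. -/
noncomputable def actMap : A ⊗[K] M →ₗ[K] M :=
  TensorProduct.lift (LinearMap.mk₂ K (fun a m => a • m)
    (fun a b m => add_smul a b m)
    (fun k a m => smul_assoc k a m)
    (fun a m n => smul_add a m n)
    (fun k a m => (smul_comm k a m).symm))

/-- Left multiplication by `a : A` on a left `A`-module, as a `K`-linear map. -/
def lsmulMap (a : A) : M →ₗ[K] M where
  toFun := fun m => a • m
  map_add' := fun x y => smul_add a x y
  map_smul' := fun k m => (smul_comm k a m).symm

/-- `a ↦ a • n` as a `K`-linear map `A → M`. -/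
def smulBy (n : M) : A →ₗ[K] M where
  toFun := fun a => a • n
  map_add' := fun a b => add_smul a b n
  map_smul' := fun k a => smul_assoc k a n

/-- `D : M → A ⊗ M` is a connection with respect to the universal differential
calculus. -/
def IsConnection (D : M →ₗ[K] A ⊗[K] M) : Prop :=
  (∀ m : M, actMap K A M (D m) = 0) ∧
  ∀ (a : A) (m : M),
    D (a • m) = LinearMap.rTensor M (LinearMap.mulLeft K a) (D m)
      + (1 : A) ⊗ₜ[K] (a • m) - a ⊗ₜ[K] m

/-- Flatness of a connection: `Σ 1 ⊗ m_A ⊗ m_M = Σ m_A ⊗ D(m_M)`. -/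
def IsFlatConnection (D : M →ₗ[K] A ⊗[K] M) : Prop :=
  ∀ m : M, (1 : A) ⊗ₜ[K] (D m) = LinearMap.lTensor A D (D m)

/-- The induced right operation `m·a := a m − Σ m_A a m_M`. -/
noncomputable def rop (D : M →ₗ[K] A ⊗[K] M) (m : M) (a : A) : M :=
  a • m - actMap K A M (LinearMap.rTensor M (LinearMap.mulRight K a) (D m))

/-- The induced right operation by `a`, `m ↦ m·a = a m − Σ m_A a m_M`, as a `K`-linear
map `M → M`. -/
noncomputable def ropMap (D : M →ₗ[K] A ⊗[K] M) (a : A) : M →ₗ[K] M :=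
  lsmulMap K A M a
    - (actMap K A M).comp ((LinearMap.rTensor M (LinearMap.mulRight K a)).comp D)

/-!
Write `m·a = actMap (a ⊗ m - (∇m)a)`. Extending the Leibniz rule linearly gives
`∇(actMap t) = contract ((id ⊗ ∇) t) + 1 ⊗ actMap t - t` for every `t : A ⊗ M`.
Flatness `(id ⊗ ∇)(∇m) = 1 ⊗ ∇m` gives `(id ⊗ ∇)((∇m)a) = a ⊗ ∇m = (id ⊗ ∇)(a ⊗ m)`, so the
contraction term vanishes for `t = a ⊗ m - (∇m)a`; flatness also turns
`Σ m_A ⊗ actMap ((∇m_M)a)` into `1 ⊗ actMap ((∇m)a)`, and both sides then agree term by term.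
-/

section

variable {N : Type*} [AddCommGroup N] [Module K N]

/-- Contraction `b ⊗ (c ⊗ n) ↦ (b * c) ⊗ n`. -/
noncomputable def contractMap : A ⊗[K] (A ⊗[K] N) →ₗ[K] A ⊗[K] N :=
  (LinearMap.rTensor N (LinearMap.mul' K A)).comp
    (TensorProduct.assoc K A A N).symm.toLinearMap

variable {K A}

lemma contractMap_tmul (a : A) (t : A ⊗[K] N) :
    contractMap K A (a ⊗ₜ[K] t) = LinearMap.rTensor N (LinearMap.mulLeft K a) t := by
  induction t using TensorProduct.induction_on with
  | zero => simp
  | tmul c n => simp [contractMap]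
  | add x y hx hy => simp only [tmul_add, map_add, hx, hy]

lemma IsFlatConnection.lTensor_comp_apply {P : Type*} [AddCommGroup P] [Module K P]
    {D : N →ₗ[K] A ⊗[K] N} (hflat : IsFlatConnection K A N D) (f : A ⊗[K] N →ₗ[K] P)
    (n : N) :
    LinearMap.lTensor A (f ∘ₗ D) (D n) = (1 : A) ⊗ₜ[K] f (D n) := by
  rw [LinearMap.lTensor_comp, LinearMap.comp_apply, ← hflat n, LinearMap.lTensor_tmul]

lemma IsFlatConnection.lTensor_rTensor_mulRight {D : N →ₗ[K] A ⊗[K] N}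
    (hflat : IsFlatConnection K A N D) (a : A) (n : N) :
    LinearMap.lTensor A D (LinearMap.rTensor N (LinearMap.mulRight K a) (D n))
      = a ⊗ₜ[K] D n := by
  rw [← LinearMap.comp_apply, LinearMap.lTensor_comp_rTensor, ← LinearMap.rTensor_comp_lTensor,
    LinearMap.comp_apply, ← hflat n, LinearMap.rTensor_tmul, LinearMap.mulRight_apply, one_mul]

end

section

variable {K A M}

lemma actMap_tmul (a : A) (m : M) : actMap K A M (a ⊗ₜ[K] m) = a • m := rfl

lemma rop_eq_actMap (D : M →ₗ[K] A ⊗[K] M) (m : M) (a : A) :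
    rop K A M D m a
      = actMap K A M (a ⊗ₜ[K] m - LinearMap.rTensor M (LinearMap.mulRight K a) (D m)) := by
  rw [map_sub, actMap_tmul, rop]

lemma IsConnection.apply_actMap {D : M →ₗ[K] A ⊗[K] M} (hconn : IsConnection K A M D)
    (t : A ⊗[K] M) :
    D (actMap K A M t)
      = contractMap K A (LinearMap.lTensor A D t) + (1 : A) ⊗ₜ[K] actMap K A M t - t := by
  induction t using TensorProduct.induction_on with
  | zero => simp
  | tmul b m => rw [actMap_tmul, hconn.2 b m, LinearMap.lTensor_tmul, contractMap_tmul]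
  | add x y hx hy =>
      simp only [map_add, hx, hy, tmul_add]
      abel

end

/-- A flat connection `D` with respect to the universal differential
calculus is a bimodule connection: `D(m·a) = Σ m_A ⊗ (m_M·a) + σ̃(m,a)`, where
`σ̃(m,a) = 1⊗(a m) − a⊗m + Σ (m_A a)⊗m_M − Σ m_A⊗(a m_M)`. -/
theorem flat_connection_is_bimodule_connection (D : M →ₗ[K] A ⊗[K] M)
    (hconn : IsConnection K A M D) (hflat : IsFlatConnection K A M D)
    (a : A) (m : M) :
    D (rop K A M D m a)
      = LinearMap.lTensor A (ropMap K A M D a) (D m)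
        + ((1 : A) ⊗ₜ[K] (a • m) - a ⊗ₜ[K] m
            + LinearMap.rTensor M (LinearMap.mulRight K a) (D m)
            - LinearMap.lTensor A (lsmulMap K A M a) (D m)) := by
  have hcontract : LinearMap.lTensor A D
      (a ⊗ₜ[K] m - LinearMap.rTensor M (LinearMap.mulRight K a) (D m)) = 0 := by
    rw [map_sub, LinearMap.lTensor_tmul, hflat.lTensor_rTensor_mulRight, sub_self]
  have hropMap : LinearMap.lTensor A (ropMap K A M D a) (D m)
      = LinearMap.lTensor A (lsmulMap K A M a) (D m)
        - (1 : A) ⊗ₜ[K] actMap K A M (LinearMap.rTensor M (LinearMap.mulRight K a) (D m)) := by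
    rw [ropMap, LinearMap.lTensor_sub, LinearMap.sub_apply, ← LinearMap.comp_assoc,
      hflat.lTensor_comp_apply, LinearMap.comp_apply]
  rw [rop_eq_actMap, hconn.apply_actMap, hcontract, map_zero, zero_add, hropMap, map_sub,
    actMap_tmul, tmul_sub]
  abel
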